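/- arXiv:2602.22864 — 10 statements merged into one kernel-verified Lean document; each statement's English description precedes it below -/
import Mathlib

section
/- Let G be a transitive group of permutations of a set Ω. Then G is primitive if and only if every non-trivial G-invariant topology on Ω is T0. -/
/-- A topology on `Ω` is invariant under a group `G` of permutations of `Ω`
if every element of `G` is a homeomorphism. -/
def TopInvariant {Ω : Type*} (G : Subgroup (Equiv.Perm Ω)) (τ : TopologicalSpace Ω) : Prop :=
  ∀ g ∈ G, ∀ s : Set Ω, τ.IsOpen s ↔ τ.IsOpen (g '' s)

/-- A topology on `Ω` is trivial if it is invariant under every permutation of `Ω`. -/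
def TopTrivial {Ω : Type*} (τ : TopologicalSpace Ω) : Prop :=
  ∀ (g : Equiv.Perm Ω) (s : Set Ω), τ.IsOpen s ↔ τ.IsOpen (g '' s)

/-- A group of permutations is transitive. -/
def SubgroupTransitive {Ω : Type*} (G : Subgroup (Equiv.Perm Ω)) : Prop :=
  ∀ x y : Ω, ∃ g ∈ G, g x = y

/-- A group of permutations is primitive: it is transitive and the only
`G`-invariant equivalence relations are equality and the universal relation. -/
def SubgroupPrimitive {Ω : Type*} (G : Subgroup (Equiv.Perm Ω)) : Prop :=
  SubgroupTransitive G ∧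
    ∀ r : Ω → Ω → Prop, Equivalence r →
      (∀ g ∈ G, ∀ x y : Ω, r x y → r (g x) (g y)) →
      (∀ x y : Ω, r x y ↔ x = y) ∨ (∀ x y : Ω, r x y)

/-!
For a `G`-invariant topology, inseparability is a `G`-invariant equivalence relation; it is
equality exactly when the topology is T0, and universal exactly when the topology is indiscrete,
hence invariant under all permutations. Conversely, a `G`-invariant equivalence relation `r` is
the inseparability relation of the `G`-invariant topology of `r`-saturated sets. Finally, a topology
invariant under all of `Sym(Ω)` that is not T0 is indiscrete, because `Sym(Ω)` is 2-transitive and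
so moves one inseparable pair of distinct points onto any other pair.
-/

open Topology

section

variable {Ω : Type*}

theorem topInvariant_iff_forall_continuous {G : Subgroup (Equiv.Perm Ω)}
    {τ : TopologicalSpace Ω} : TopInvariant G τ ↔ ∀ g ∈ G, Continuous[τ, τ] g := by
  constructor
  · intro hτ g hg
    refine ⟨fun s hs => ?_⟩
    rw [← Equiv.image_symm_eq_preimage]
    exact (hτ g⁻¹ (inv_mem hg) s).mp hs
  · intro hcont g hg s
    refine ⟨fun hs => ?_, fun hs => ?_⟩
    · rw [Equiv.image_eq_preimage_symm]
      exact (hcont g⁻¹ (inv_mem hg)).isOpen_preimage s hs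
    · rw [← Equiv.preimage_image g s]
      exact (hcont g hg).isOpen_preimage _ hs

theorem topTrivial_iff_topInvariant_top {τ : TopologicalSpace Ω} :
    TopTrivial τ ↔ TopInvariant ⊤ τ := by
  simp only [TopTrivial, TopInvariant, Subgroup.mem_top, forall_const]

theorem topTrivial_of_indiscreteTopology [TopologicalSpace Ω] [IndiscreteTopology Ω] :
    TopTrivial ‹TopologicalSpace Ω› :=
  topTrivial_iff_topInvariant_top.mpr <|
    topInvariant_iff_forall_continuous.mpr fun _ _ => continuous_of_indiscreteTopology

theorem TopTrivial.t0Space_or_indiscreteTopology [TopologicalSpace Ω]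
    (hτ : TopTrivial ‹TopologicalSpace Ω›) : T0Space Ω ∨ IndiscreteTopology Ω := by
  refine or_iff_not_imp_left.mpr fun hT0 => .of_forall_inseparable fun a b => ?_
  obtain ⟨x, y, hxy, hne⟩ : ∃ x y : Ω, Inseparable x y ∧ x ≠ y := by
    simpa [t0Space_iff_inseparable] using hT0
  rcases eq_or_ne a b with rfl | hab
  · rfl
  obtain ⟨g, rfl, rfl⟩ : ∃ g : Equiv.Perm Ω, g x = a ∧ g y = b :=
    MulAction.is_two_pretransitive_iff.mp (Equiv.Perm.isMultiplyPretransitive Ω 2) hne hab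
  exact hxy.map <| topInvariant_iff_forall_continuous.mp
    (topTrivial_iff_topInvariant_top.mp hτ) g (Subgroup.mem_top g)

abbrev saturatedTopology (r : Ω → Ω → Prop) : TopologicalSpace Ω :=
  .induced (Quot.mk r) ⊥

theorem inseparable_saturatedTopology_iff {r : Ω → Ω → Prop} (hr : Equivalence r) {x y : Ω} :
    @Inseparable Ω (saturatedTopology r) x y ↔ r x y := by
  let _ : TopologicalSpace (Quot r) := ⊥
  have : DiscreteTopology (Quot r) := ⟨rfl⟩
  let _ := saturatedTopology r
  rw [← (IsInducing.induced (Quot.mk r)).inseparable_iff, inseparable_iff_eq,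
    hr.quot_mk_eq_iff]

theorem topInvariant_saturatedTopology {G : Subgroup (Equiv.Perm Ω)} {r : Ω → Ω → Prop}
    (hrG : ∀ g ∈ G, ∀ x y, r x y → r (g x) (g y)) :
    TopInvariant G (saturatedTopology r) := by
  let _ : TopologicalSpace (Quot r) := ⊥
  have : DiscreteTopology (Quot r) := ⟨rfl⟩
  let _ := saturatedTopology r
  refine topInvariant_iff_forall_continuous.mpr fun g hg => continuous_induced_rng.mpr ?_
  change Continuous (Quot.map g (hrG g hg) ∘ Quot.mk r)
  exact continuous_of_discreteTopology.comp continuous_induced_dom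

end

theorem primitive_iff_invariant_topologies_T0 {Ω : Type*} (G : Subgroup (Equiv.Perm Ω))
    (hG : SubgroupTransitive G) :
    SubgroupPrimitive G ↔
      ∀ τ : TopologicalSpace Ω, TopInvariant G τ → ¬ TopTrivial τ → @T0Space Ω τ := by
  constructor
  · rintro ⟨-, hprim⟩ τ hτ hnt
    let _ := τ
    have hinv : ∀ g ∈ G, ∀ x y : Ω, Inseparable x y → Inseparable (g x) (g y) :=
      fun g hg _ _ h => h.map (topInvariant_iff_forall_continuous.mp hτ g hg)
    rcases hprim _ ⟨.refl, .symm, .trans⟩ hinv with heq | huniv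
    · exact ⟨fun x y h => (heq x y).mp h⟩
    · have := IndiscreteTopology.of_forall_inseparable huniv
      exact absurd topTrivial_of_indiscreteTopology hnt
  · refine fun hinvT0 => ⟨hG, fun r hr hrG => ?_⟩
    let _ := saturatedTopology r
    have hτ := topInvariant_saturatedTopology hrG
    have hT0_or_indiscrete : T0Space Ω ∨ IndiscreteTopology Ω := by
      by_cases htriv : TopTrivial (saturatedTopology r)
      · exact htriv.t0Space_or_indiscreteTopology
      · exact .inl (hinvT0 _ hτ htriv)
    rcases hT0_or_indiscrete with h | h
    · exact .inl fun x y => (inseparable_saturatedTopology_iff hr).symm.trans inseparable_iff_eq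
    · exact .inr fun x y => (inseparable_saturatedTopology_iff hr).mp (Inseparable.all x y)
end

section
/- Let G be a primitive group of permutations of a countably infinite set Ω. Then G preserves a topology on Ω that is not discrete and has an open set which is neither empty nor cofinite, if and only if there exists a moiety Δ of Ω such that for all g₁, …, gₙ ∈ G the set Δg₁ ∩ ⋯ ∩ Δgₙ is empty or infinite. -/
/-- A moiety of a countably infinite set: a subset that is infinite and co-infinite. -/
def IsMoiety {Ω : Type*} (Δ : Set Ω) : Prop :=
  Δ.Infinite ∧ Δᶜ.Infinite

open Set Equiv TopologicalSpace Topology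

theorem Set.Finite.exists_fin_iInter_eq_sInter {ι α : Type*} {φ : ι → Set α} {f : Set (Set α)}
    (hf : f.Finite) (hfφ : f ⊆ range φ) : ∃ (n : ℕ) (e : Fin n → ι), ⋂ i, φ (e i) = ⋂₀ f := by
  rw [← image_univ] at hfφ
  obtain ⟨t, -, ht, rfl⟩ := exists_subset_image_finite_and.1 ⟨f, hfφ, hf, rfl⟩
  obtain ⟨n, e, -, rfl⟩ := ht.fin_param
  exact ⟨n, e, by rw [sInter_image, biInter_range]⟩

theorem TopologicalSpace.infinite_of_isOpen_generateFrom {α : Type*} {S : Set (Set α)}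
    (hS : ∀ f ⊆ S, f.Finite → (⋂₀ f).Nonempty → (⋂₀ f).Infinite)
    {U : Set α} (hU : IsOpen[generateFrom S] U) (hne : U.Nonempty) : U.Infinite := by
  let := generateFrom S
  obtain ⟨x, hx⟩ := hne
  obtain ⟨_, ⟨f, ⟨hf, hfS⟩, rfl⟩, hxf, hfU⟩ :=
    (isTopologicalBasis_of_subbasis rfl).exists_subset_of_mem_open hx hU
  exact (hS f hfS hf ⟨x, hxf⟩).mono hfU

section

variable {Ω : Type*} {G : Subgroup (Perm Ω)}

theorem TopInvariant.isOpen_image {τ : TopologicalSpace Ω} (hinv : TopInvariant G τ)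
    {g : Perm Ω} (hg : g ∈ G) {s : Set Ω} (hs : IsOpen[τ] s) : IsOpen[τ] (g '' s) :=
  (hinv g hg s).1 hs

theorem TopInvariant.eq_bot_of_isOpen_singleton {τ : TopologicalSpace Ω} (hinv : TopInvariant G τ)
    (hG : SubgroupTransitive G) {v : Ω} (hv : IsOpen[τ] {v}) : τ = ⊥ :=
  eq_bot_of_singletons_open fun x => by
    obtain ⟨g, hg, rfl⟩ := hG v x
    simpa using hinv.isOpen_image hg hv

theorem TopInvariant.image_eq_of_inter_nonempty {τ : TopologicalSpace Ω} (hinv : TopInvariant G τ)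
    {V : Set Ω} (hVo : IsOpen[τ] V) (hVfin : V.Finite)
    (hmin : ∀ W : Set Ω, IsOpen[τ] W → W.Nonempty → W.Finite → V.ncard ≤ W.ncard)
    {g h : Perm Ω} (hg : g ∈ G) (hh : h ∈ G) (hne : (g '' V ∩ h '' V).Nonempty) :
    g '' V = h '' V := by
  have hle : V.ncard ≤ (g '' V ∩ h '' V).ncard :=
    hmin _ ((hinv.isOpen_image hg hVo).inter (hinv.isOpen_image hh hVo)) hne
      ((hVfin.image g).subset inter_subset_left)
  have hgV : (g '' V).ncard = V.ncard := ncard_image_of_injective V g.injective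
  have hhV : (h '' V).ncard = V.ncard := ncard_image_of_injective V h.injective
  calc g '' V = g '' V ∩ h '' V :=
        (eq_of_subset_of_ncard_le inter_subset_left (by omega) (hVfin.image g)).symm
    _ = h '' V := eq_of_subset_of_ncard_le inter_subset_right (by omega) (hVfin.image h)

theorem SubgroupPrimitive.eq_singleton_or_eq_univ_of_block (hG : SubgroupPrimitive G)
    {V : Set Ω} {v : Ω} (hv : v ∈ V)
    (hV : ∀ g ∈ G, ∀ h ∈ G, ((g : Perm Ω) '' V ∩ h '' V).Nonempty → (g : Perm Ω) '' V = h '' V) :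
    V = {v} ∨ V = univ := by
  let r : Ω → Ω → Prop := fun x y => ∃ g ∈ G, x ∈ (g : Perm Ω) '' V ∧ y ∈ (g : Perm Ω) '' V
  have hr : Equivalence r := by
    refine ⟨fun x => ?_, fun ⟨g, hg, hx, hy⟩ => ⟨g, hg, hy, hx⟩, ?_⟩
    · obtain ⟨g, hg, rfl⟩ := hG.1 v x
      exact ⟨g, hg, mem_image_of_mem g hv, mem_image_of_mem g hv⟩
    · rintro x y z ⟨g, hg, hx, hy⟩ ⟨h, hh, hy', hz⟩
      exact ⟨h, hh, hV g hg h hh ⟨y, hy, hy'⟩ ▸ hx, hz⟩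
  have hrG : ∀ k ∈ G, ∀ x y, r x y → r (k x) (k y) := by
    rintro k hk x y ⟨g, hg, hx, hy⟩
    refine ⟨k * g, mul_mem hk hg, ?_, ?_⟩ <;>
      simpa only [Perm.coe_mul, image_comp] using mem_image_of_mem k ‹_›
  have hrv : ∀ x, r x v ↔ x ∈ V := fun x =>
    ⟨fun ⟨g, hg, hx, hvg⟩ => by
      simpa [hV g hg 1 (one_mem G) ⟨v, hvg, by simpa using hv⟩] using hx,
    fun hx => ⟨1, one_mem G, by simpa using hx, by simpa using hv⟩⟩
  rcases hG.2 r hr hrG with hdisc | huniv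
  · exact .inl (eq_singleton_iff_unique_mem.2 ⟨hv, fun x hx => (hdisc x v).1 ((hrv x).2 hx)⟩)
  · exact .inr (eq_univ_of_forall fun x => (hrv x).1 (huniv x v))

theorem TopInvariant.infinite_of_isOpen [Infinite Ω] (hG : SubgroupPrimitive G)
    {τ : TopologicalSpace Ω} (hinv : TopInvariant G τ) (hτ : τ ≠ ⊥)
    {U : Set Ω} (hU : IsOpen[τ] U) (hne : U.Nonempty) : U.Infinite := by
  classical
  intro hUfin
  have hP : ∃ n, ∃ V : Set Ω, IsOpen[τ] V ∧ V.Nonempty ∧ V.Finite ∧ V.ncard = n :=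
    ⟨_, U, hU, hne, hUfin, rfl⟩
  obtain ⟨V, hVo, ⟨v, hv⟩, hVfin, hVcard⟩ := Nat.find_spec hP
  have hmin : ∀ W : Set Ω, IsOpen[τ] W → W.Nonempty → W.Finite → V.ncard ≤ W.ncard :=
    fun W hWo hWne hWfin => hVcard ▸ Nat.find_min' hP ⟨W, hWo, hWne, hWfin, rfl⟩
  rcases hG.eq_singleton_or_eq_univ_of_block hv
      (fun g hg h hh => hinv.image_eq_of_inter_nonempty hVo hVfin hmin hg hh) with rfl | rfl
  · exact hτ (hinv.eq_bot_of_isOpen_singleton hG.1 hVo)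
  · exact infinite_univ hVfin

theorem topInvariant_generateFrom {S : Set (Set Ω)}
    (hS : ∀ g ∈ G, ∀ s ∈ S, (g : Perm Ω) '' s ∈ S) : TopInvariant G (generateFrom S) := by
  have himage : ∀ g ∈ G, ∀ s, GenerateOpen S s → GenerateOpen S ((g : Perm Ω) '' s) := by
    intro g hg s hs
    induction hs with
    | basic t ht => exact .basic _ (hS g hg t ht)
    | univ => simpa only [image_univ, Equiv.range_eq_univ] using .univ
    | inter u v _ _ hu hv => simpa only [image_inter g.injective] using .inter _ _ hu hv
    | sUnion K _ hK =>
      rw [image_sUnion]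
      exact .sUnion _ (by rintro _ ⟨u, hu, rfl⟩; exact hK u hu)
  refine fun g hg s => ⟨himage g hg s, fun hgs => (?_ : GenerateOpen S s)⟩
  simpa only [symm_image_image] using himage g.symm (inv_mem hg) _ hgs

end

theorem invariant_topology_iff_moiety_general {Ω : Type*} [Infinite Ω]
    (G : Subgroup (Equiv.Perm Ω)) (hG : SubgroupPrimitive G) :
    (∃ τ : TopologicalSpace Ω, TopInvariant G τ ∧ τ ≠ ⊥ ∧
        ∃ s : Set Ω, τ.IsOpen s ∧ s.Nonempty ∧ sᶜ.Infinite) ↔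
      (∃ Δ : Set Ω, IsMoiety Δ ∧
        ∀ (n : ℕ) (g : Fin n → G),
          (⋂ i, (g i : Equiv.Perm Ω) '' Δ) = ∅ ∨ (⋂ i, (g i : Equiv.Perm Ω) '' Δ).Infinite) := by
  constructor
  · rintro ⟨τ, hinv, hτ, Δ, hΔo, hΔ, hΔc⟩
    refine ⟨Δ, ⟨hinv.infinite_of_isOpen hG hτ hΔo hΔ, hΔc⟩, fun n g => ?_⟩
    refine (eq_empty_or_nonempty _).imp_right (hinv.infinite_of_isOpen hG hτ ?_)
    exact @isOpen_iInter_of_finite _ _ τ _ _ fun i => hinv.isOpen_image (g i).2 hΔo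
  · rintro ⟨Δ, ⟨hΔ, hΔc⟩, hΔG⟩
    set S := range fun g : G => (g : Perm Ω) '' Δ
    have hinf (U : Set Ω) (hU : IsOpen[generateFrom S] U) (hne : U.Nonempty) : U.Infinite := by
      refine infinite_of_isOpen_generateFrom (fun f hfS hf hfne => ?_) hU hne
      obtain ⟨n, g, hg⟩ := hf.exists_fin_iInter_eq_sInter hfS
      exact hg ▸ (hΔG n g).resolve_left (hg ▸ hfne).ne_empty
    have hΔo : IsOpen[generateFrom S] Δ := .basic _ ⟨1, by simp⟩
    refine ⟨generateFrom S, topInvariant_generateFrom ?_, ?_, Δ, hΔo, hΔ.nonempty, hΔc⟩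
    · rintro g hg _ ⟨h, rfl⟩
      exact ⟨⟨g, hg⟩ * h, by simp [image_image]⟩
    · obtain ⟨x, -⟩ := hΔ.nonempty
      intro hbot
      exact hinf {x} (by rw [hbot]; trivial) (singleton_nonempty x) (finite_singleton x)

theorem invariant_topology_iff_moiety {Ω : Type*} [Countable Ω] [Infinite Ω]
    (G : Subgroup (Equiv.Perm Ω)) (hG : SubgroupPrimitive G) :
    (∃ τ : TopologicalSpace Ω, TopInvariant G τ ∧ τ ≠ ⊥ ∧
        ∃ s : Set Ω, τ.IsOpen s ∧ s.Nonempty ∧ sᶜ.Infinite) ↔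
      (∃ Δ : Set Ω, IsMoiety Δ ∧
        ∀ (n : ℕ) (g : Fin n → G),
          (⋂ i, (g i : Equiv.Perm Ω) '' Δ) = ∅ ∨ (⋂ i, (g i : Equiv.Perm Ω) '' Δ).Infinite) :=
  invariant_topology_iff_moiety_general G hG
end

section
/- Let G be a primitive group of permutations of a countably infinite set Ω. Then G preserves a filter on Ω that does not contain the empty set and contains a set with infinite complement, if and only if there exists a moiety Δ of Ω such that for all g₁, …, gₙ ∈ G the set Δg₁ ∩ ⋯ ∩ Δgₙ is infinite. -/
/-- A filter on `Ω` is invariant under a group `G` of permutations of `Ω`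
if `gS ∈ F` for every `g ∈ G` and `S ∈ F`. -/
def FilterInvariant {Ω : Type*} (G : Subgroup (Equiv.Perm Ω)) (F : Filter Ω) : Prop :=
  ∀ g ∈ G, ∀ S ∈ F, g '' S ∈ F

/-!
If `G` is transitive and `F` is a `G`-invariant proper filter, then no member `T` of `F` is
finite: for `x ∈ T`, `y ∉ T` and `g ∈ G` with `g y = x`, the member `T ∩ gT` misses `x`, so finite
members would descend forever. Hence any `S ∈ F` with infinite complement is a moiety all of whose
finite intersections of translates, being in `F`, are infinite. Conversely, the translates of such
a moiety `Δ` generate a proper invariant filter.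
-/

open Set Filter

section

variable {Ω : Type*} {G : Subgroup (Equiv.Perm Ω)}

namespace FilterInvariant

variable {F : Filter Ω}

theorem exists_ssubset_mem (hG : SubgroupTransitive G) (hF : FilterInvariant G F) {T : Set Ω}
    (hT : T ∈ F) {x y : Ω} (hx : x ∈ T) (hy : y ∉ T) : ∃ T' ∈ F, T' ⊂ T := by
  obtain ⟨g, hg, rfl⟩ := hG y x
  refine ⟨T ∩ g '' T, inter_mem hT (hF g hg T hT),
    ssubset_iff_of_subset inter_subset_left |>.2 ⟨g y, hx, fun h => hy ?_⟩⟩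
  simpa using mem_image_equiv.1 h.2

theorem infinite_of_mem [Infinite Ω] (hG : SubgroupTransitive G) (hF : FilterInvariant G F)
    (hbot : ∅ ∉ F) {T : Set Ω} (hT : T ∈ F) : T.Infinite := by
  intro hfin
  lift T to Finset Ω using hfin
  induction T using WellFoundedLT.induction with
  | _ T ih =>
    obtain ⟨x, hx⟩ : (T : Set Ω).Nonempty := nonempty_iff_ne_empty.2 fun h => hbot (h ▸ hT)
    obtain ⟨y, hy⟩ := T.finite_toSet.infinite_compl.nonempty
    obtain ⟨T', hT', hT'T⟩ := hF.exists_ssubset_mem hG hT hx hy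
    lift T' to Finset Ω using (T.finite_toSet.subset hT'T.subset)
    exact ih T' (Finset.coe_ssubset.1 hT'T) hT'

end FilterInvariant

variable (G) in
theorem filterInvariant_iInf_principal_image (Δ : Set Ω) :
    FilterInvariant G (⨅ g : G, 𝓟 ((g : Equiv.Perm Ω) '' Δ)) := by
  intro h hh S hS
  rw [Equiv.image_eq_preimage_symm]
  refine (?_ : _ ≤ comap _ _) (preimage_mem_comap hS)
  simp only [comap_iInf, comap_principal, ← Equiv.image_eq_preimage_symm]
  refine le_iInf fun g => iInf_le_of_le (⟨h, hh⟩ * g) (principal_mono.2 ?_)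
  simp [image_image]

theorem neBot_iInf_principal_image {Δ : Set Ω}
    (hΔ : ∀ (n : ℕ) (g : Fin n → G), (⋂ i, (g i : Equiv.Perm Ω) '' Δ).Nonempty) :
    NeBot (⨅ g : G, 𝓟 ((g : Equiv.Perm Ω) '' Δ)) := by
  refine (hasBasis_iInf_principal_finite _).neBot_iff.2 fun {t} ht => ?_
  obtain ⟨n, g, -, rfl⟩ := ht.fin_param
  simpa only [biInter_range] using hΔ n g

end

theorem invariant_filter_iff_moiety_general {Ω : Type*} [Infinite Ω]
    (G : Subgroup (Equiv.Perm Ω)) (hG : SubgroupPrimitive G) :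
    (∃ F : Filter Ω, FilterInvariant G F ∧ ∅ ∉ F ∧ ∃ S ∈ F, Sᶜ.Infinite) ↔
      (∃ Δ : Set Ω, IsMoiety Δ ∧
        ∀ (n : ℕ) (g : Fin n → G), (⋂ i, (g i : Equiv.Perm Ω) '' Δ).Infinite) := by
  constructor
  · rintro ⟨F, hF, hbot, S, hS, hSc⟩
    have mem_infinite {T} (hT : T ∈ F) : T.Infinite := hF.infinite_of_mem hG.1 hbot hT
    exact ⟨S, ⟨mem_infinite hS, hSc⟩, fun n g => mem_infinite (iInter_mem.2 fun i => hF _ (g i).2 S hS)⟩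
  · rintro ⟨Δ, hΔ, hinter⟩
    have := neBot_iInf_principal_image fun n g => (hinter n g).nonempty
    exact ⟨_, filterInvariant_iInf_principal_image G Δ, empty_notMem _, Δ,
      mem_iInf_of_mem 1 (by simp), hΔ.2⟩

theorem invariant_filter_iff_moiety {Ω : Type*} [Countable Ω] [Infinite Ω]
    (G : Subgroup (Equiv.Perm Ω)) (hG : SubgroupPrimitive G) :
    (∃ F : Filter Ω, FilterInvariant G F ∧ ∅ ∉ F ∧ ∃ S ∈ F, Sᶜ.Infinite) ↔
      (∃ Δ : Set Ω, IsMoiety Δ ∧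
        ∀ (n : ℕ) (g : Fin n → G), (⋂ i, (g i : Equiv.Perm Ω) '' Δ).Infinite) :=
  invariant_filter_iff_moiety_general G hG
end

section
/- There exists a homeomorphism h of ℚ (with its usual topology) such that the cyclic group generated by h acts transitively on ℚ; that is, for all x, y ∈ ℚ there is an integer n with hⁿ(x) = y. -/
/-!
The multiples of `√2` form a countable dense subgroup `S` of the circle `ℝ/ℤ`, and translation by
`√2` is a homeomorphism of `S` whose powers act transitively. Cutting the circle at a point outside
`S` identifies `S` with a subset of an open interval that is dense in that interval. Such a set is a
countable dense linear order without endpoints whose topology is the order topology, so by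
Cantor's back-and-forth theorem it is homeomorphic to `ℚ`.
-/

open Set

section CountableDenseOrder

variable {α : Type*} [LinearOrder α] [TopologicalSpace α] [OrderTopology α] [DenselyOrdered α]
  {s : Set α}

theorem exists_mem_Ioo_left_of_subset_interior_closure (hs : s ⊆ interior (closure s)) {a x : α}
    (ha : a ∈ s) (hx : x < a) : ∃ b ∈ s, x < b ∧ b < a := by
  obtain ⟨c, hca, hc⟩ := exists_Ioc_subset_of_mem_nhds (isOpen_interior.mem_nhds (hs ha)) ⟨x, hx⟩
  obtain ⟨z, hz, hza⟩ := exists_between (max_lt hx hca)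
  have hz_closure : z ∈ closure s :=
    interior_subset (hc ⟨(le_max_right _ _).trans_lt hz, hza.le⟩)
  obtain ⟨b, ⟨hxb, hba⟩, hbs⟩ := mem_closure_iff.1 hz_closure _ isOpen_Ioo ⟨hz, hza⟩
  exact ⟨b, hbs, (le_max_left _ _).trans_lt hxb, hba⟩

theorem exists_mem_Ioo_right_of_subset_interior_closure (hs : s ⊆ interior (closure s)) {a x : α}
    (ha : a ∈ s) (hx : a < x) : ∃ b ∈ s, a < b ∧ b < x := by
  obtain ⟨b, hbs, hxb, hba⟩ := exists_mem_Ioo_left_of_subset_interior_closure (α := αᵒᵈ) hs ha hx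
  exact ⟨b, hbs, hba, hxb⟩

theorem Set.Countable.nonempty_homeomorph_rat [NoMinOrder α] [NoMaxOrder α] (hc : s.Countable)
    (hne : s.Nonempty) (hs : s ⊆ interior (closure s)) : Nonempty (s ≃ₜ ℚ) := by
  have : OrderTopology s := induced_orderTopology' _ Iff.rfl
    (fun {a x} hx ↦
      let ⟨b, hbs, hxb, hba⟩ := exists_mem_Ioo_left_of_subset_interior_closure hs a.2 hx
      ⟨⟨b, hbs⟩, hba, hxb.le⟩)
    (fun {a x} hx ↦
      let ⟨b, hbs, hab, hbx⟩ := exists_mem_Ioo_right_of_subset_interior_closure hs a.2 hx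
      ⟨⟨b, hbs⟩, hab, hbx.le⟩)
  have : DenselyOrdered s := ⟨fun a b hab ↦
    let ⟨c, hcs, hac, hcb⟩ := exists_mem_Ioo_left_of_subset_interior_closure hs b.2 hab
    ⟨⟨c, hcs⟩, hac, hcb⟩⟩
  have : NoMinOrder s := ⟨fun a ↦
    let ⟨x, hx⟩ := exists_lt a.1
    let ⟨b, hbs, _, hba⟩ := exists_mem_Ioo_left_of_subset_interior_closure hs a.2 hx
    ⟨⟨b, hbs⟩, hba⟩⟩
  have : NoMaxOrder s := ⟨fun a ↦
    let ⟨x, hx⟩ := exists_gt a.1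
    let ⟨b, hbs, hab, _⟩ := exists_mem_Ioo_right_of_subset_interior_closure hs a.2 hx
    ⟨⟨b, hbs⟩, hab⟩⟩
  have : Countable s := hc.to_subtype
  have : Nonempty s := hne.to_subtype
  obtain ⟨φ⟩ := Order.iso_of_countable_dense s ℚ
  exact ⟨φ.toHomeomorph⟩

end CountableDenseOrder

namespace AddCircle

variable {p : ℝ} [Fact (0 < p)]

instance : Uncountable (AddCircle p) := by
  have : Uncountable (Ico 0 (0 + p)) := by
    rw [← not_countable_iff, countable_coe_iff, Cardinal.Real.Ico_countable_iff, not_le]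
    simpa using (Fact.out : 0 < p)
  exact (equivIco p 0).symm.injective.uncountable

theorem nonempty_homeomorph_rat_of_dense {s : Set (AddCircle p)} (hd : Dense s)
    (hc : s.Countable) : Nonempty (s ≃ₜ ℚ) := by
  obtain ⟨x, hx⟩ : ∃ x, x ∉ s := by
    by_contra! h
    exact not_countable_univ (hc.mono fun y _ ↦ h y)
  obtain ⟨a, rfl⟩ := QuotientAddGroup.mk_surjective x
  set e := openPartialHomeomorphCoe p a
  have hs : s ⊆ e.symm.source := fun y hy (hya : y = a) ↦ hx (hya ▸ hy)
  set t := e.symm '' s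
  have ht : e.source ⊆ closure t := fun y hy ↦ by
    simpa only [e.left_inv hy] using
      mem_closure_image (e.continuousAt_symm (e.map_source hy)) (hd (e y))
  have ht_source : t ⊆ e.source := image_subset_iff.2 fun y hy ↦ e.map_target (hs hy)
  have ht_interior : t ⊆ interior (closure t) :=
    ht_source.trans (interior_maximal ht e.open_source)
  obtain ⟨φ⟩ := (hc.image _).nonempty_homeomorph_rat (hd.nonempty.image _) ht_interior
  exact ⟨(e.symm.homeomorphOfImageSubsetSource hs rfl).trans φ⟩

end AddCircle

theorem Equiv.permCongr_zpow {α β : Type*} (e : α ≃ β) (f : Perm α) (n : ℤ) :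
    e.permCongr f ^ n = e.permCongr (f ^ n) :=
  (map_zpow e.permCongrHom f n).symm

theorem AddSubgroup.exists_zpow_addRight_apply_eq {G : Type*} [AddGroup G] (g : G)
    (x y : zmultiples g) :
    ∃ n : ℤ, (Equiv.addRight (⟨g, mem_zmultiples g⟩ : zmultiples g) ^ n) x = y := by
  obtain ⟨n, hn⟩ := mem_zmultiples_iff.1 (-x + y).2
  refine ⟨n, Subtype.ext ?_⟩
  simp [Equiv.zsmul_addRight, hn]

/-- There is a homeomorphism of `ℚ` generating a transitive cyclic group:
some integer power of it (as a permutation of `ℚ`) maps any given rational to any other. -/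
theorem exists_transitive_homeomorph_of_rat :
    ∃ h : ℚ ≃ₜ ℚ, ∀ x y : ℚ, ∃ n : ℤ, ((h.toEquiv : Equiv.Perm ℚ) ^ n) x = y := by
  set S := AddSubgroup.zmultiples ((√2 : ℝ) : AddCircle (1 : ℝ))
  have hS_dense : Dense (S : Set (AddCircle (1 : ℝ))) := by
    rw [AddSubgroup.coe_zmultiples]
    exact AddCircle.denseRange_zsmul_coe_iff.2 (by simpa using irrational_sqrt_two)
  have hS_countable : (S : Set (AddCircle (1 : ℝ))).Countable := by
    rw [AddSubgroup.coe_zmultiples]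
    exact countable_range _
  obtain ⟨φ⟩ := AddCircle.nonempty_homeomorph_rat_of_dense hS_dense hS_countable
  let g : S := ⟨_, AddSubgroup.mem_zmultiples _⟩
  refine ⟨(φ.symm.trans (Homeomorph.addRight g)).trans φ, fun x y ↦ ?_⟩
  obtain ⟨n, hn⟩ := AddSubgroup.exists_zpow_addRight_apply_eq _ (φ.symm x) (φ.symm y)
  refine ⟨n, ?_⟩
  change (φ.toEquiv.permCongr (Equiv.addRight g) ^ n) x = y
  rw [Equiv.permCongr_zpow, Equiv.permCongr_apply]
  exact (congrArg φ hn).trans (φ.apply_symm_apply y)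
end

section
/- Let Γ be a simple graph on a countably infinite vertex set V. The following are equivalent: (a) the neighbourhood filter F_Γ does not contain the empty set; (b) Γ has a spanning subgraph R (a graph on the same vertex set V with every edge of R an edge of Γ) satisfying the extension property; (c) there exists a graph R on the vertex set V satisfying the extension property such that every set belonging to F_Γ belongs to F_R. -/
/-- The neighbourhood filter of a graph: the filter generated by the open
neighbourhoods of the vertices. -/
def nbhdFilter {V : Type*} (Γ : SimpleGraph V) : Filter V :=
  Filter.generate {s : Set V | ∃ v : V, s = Γ.neighborSet v}

/-- A graph on a countably infinite vertex set has the extension property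
(characterising the Rado graph) if for all disjoint finite sets `U`, `W` of vertices
there is a vertex outside `U ∪ W` adjacent to everything in `U` and nothing in `W`. -/
def ExtensionProperty {V : Type*} (R : SimpleGraph V) : Prop :=
  ∀ U W : Finset V, Disjoint U W →
    ∃ z : V, z ∉ U ∧ z ∉ W ∧ (∀ u ∈ U, R.Adj z u) ∧ (∀ w ∈ W, ¬ R.Adj z w)

/-!
The filter `F_Γ` is proper exactly when every finite set `T` has a common neighbour, and a common
neighbour of `T ∪ B` is a common neighbour of `T` outside `B`, as no vertex is its own neighbour.
Enumerate all pairs `(U, W)` of finite sets and, at stage `n`, choose a common `Γ`-neighbour `z n`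
of `U` avoiding every vertex mentioned at stages `≤ n`; joining each `z n` to its `U` gives a
spanning subgraph of `Γ`, and the freshness of the witnesses ensures that `z n` is never joined to
a vertex of its `W`. Conversely, the extension property makes `F_R` proper, and so is every filter
coarser than a proper one.
-/

open Filter

section NeighbourhoodFilter

variable {V : Type*}

lemma nbhdFilter_eq_iInf (G : SimpleGraph V) : nbhdFilter G = ⨅ v, 𝓟 (G.neighborSet v) := by
  refine le_antisymm (le_iInf fun v => le_principal_iff.2 (mem_generate_of_mem ⟨v, rfl⟩)) ?_
  rw [nbhdFilter, le_generate_iff]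
  rintro _ ⟨v, rfl⟩
  exact mem_iInf_of_mem v (mem_principal_self _)

lemma nbhdFilter_mono {G H : SimpleGraph V} (h : G ≤ H) : nbhdFilter G ≤ nbhdFilter H := by
  simp only [nbhdFilter_eq_iInf]
  exact iInf_mono fun v => principal_mono.2 fun _ hw => h hw

lemma empty_notMem_nbhdFilter_iff (G : SimpleGraph V) :
    ∅ ∉ nbhdFilter G ↔ ∀ T : Finset V, ∃ z, ∀ v ∈ T, G.Adj v z := by
  rw [empty_mem_iff_bot, ← ne_eq, ← neBot_iff, nbhdFilter_eq_iInf,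
    (hasBasis_iInf_principal_finite _).neBot_iff]
  refine ⟨fun h T => ?_, fun h t ht => ?_⟩
  · obtain ⟨z, hz⟩ := h T.finite_toSet
    exact ⟨z, fun v hv => Set.mem_iInter₂.1 hz v hv⟩
  · obtain ⟨z, hz⟩ := h ht.toFinset
    exact ⟨z, Set.mem_iInter₂.2 fun v hv => hz v (ht.mem_toFinset.2 hv)⟩

lemma ExtensionProperty.empty_notMem_nbhdFilter {R : SimpleGraph V}
    (hR : ExtensionProperty R) : ∅ ∉ nbhdFilter R := by
  refine (empty_notMem_nbhdFilter_iff R).2 fun T => ?_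
  obtain ⟨z, -, -, hz, -⟩ := hR T ∅ (Finset.disjoint_empty_right T)
  exact ⟨z, fun v hv => (hz v hv).symm⟩

end NeighbourhoodFilter

section RadoConstruction

variable {V : Type*} [DecidableEq V] (pick : Finset V → Finset V → V)
  (p : ℕ → Finset V × Finset V)

/-- The vertices the witness of stage `n` must avoid: those of the pairs `p k`, `k ≤ n`, and the
witnesses of the earlier stages. -/
def radoAvoid : ℕ → Finset V
  | 0 => (p 0).1 ∪ (p 0).2
  | n + 1 => insert (pick (p n).1 (radoAvoid n)) (radoAvoid n) ∪ (p (n + 1)).1 ∪ (p (n + 1)).2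

def radoWitness (n : ℕ) : V := pick (p n).1 (radoAvoid pick p n)

def radoGraph : SimpleGraph V :=
  SimpleGraph.fromRel fun a b => ∃ n, a = radoWitness pick p n ∧ b ∈ (p n).1

variable {pick p}

lemma stage_subset_radoAvoid (n : ℕ) : (p n).1 ∪ (p n).2 ⊆ radoAvoid pick p n := by
  cases n with
  | zero => exact subset_rfl
  | succ n => rw [radoAvoid, Finset.union_assoc]; exact Finset.subset_union_right

lemma radoAvoid_mono : Monotone (radoAvoid pick p) :=
  monotone_nat_of_le_succ fun n => by
    rw [radoAvoid, Finset.union_assoc]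
    exact (Finset.subset_insert _ _).trans Finset.subset_union_left

lemma radoWitness_mem_radoAvoid {k n : ℕ} (h : k < n) :
    radoWitness pick p k ∈ radoAvoid pick p n := by
  refine radoAvoid_mono h ?_
  rw [radoAvoid, Finset.union_assoc]
  exact Finset.mem_union_left _ (Finset.mem_insert_self _ _)

lemma radoWitness_notMem_stage (hpick : ∀ T B, pick T B ∉ B) {k n : ℕ} (h : k ≤ n) :
    radoWitness pick p n ∉ (p k).1 ∪ (p k).2 :=
  fun hmem => hpick _ _ (radoAvoid_mono h (stage_subset_radoAvoid k hmem))

lemma radoWitness_injective (hpick : ∀ T B, pick T B ∉ B) :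
    Function.Injective (radoWitness pick p) :=
  .of_lt_imp_ne fun _ _ h heq => hpick _ _ (heq ▸ radoWitness_mem_radoAvoid h)

lemma radoGraph_adj_radoWitness (hpick : ∀ T B, pick T B ∉ B) {n : ℕ} {u : V}
    (hu : u ∈ (p n).1) : (radoGraph pick p).Adj (radoWitness pick p n) u := by
  refine SimpleGraph.fromRel_adj _ _ _ |>.2 ⟨?_, Or.inl ⟨n, rfl, hu⟩⟩
  rintro rfl
  exact radoWitness_notMem_stage hpick le_rfl (Finset.mem_union_left _ hu)

lemma not_radoGraph_adj_radoWitness (hpick : ∀ T B, pick T B ∉ B) {n : ℕ} {w : V}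
    (hdisj : Disjoint (p n).1 (p n).2) (hw : w ∈ (p n).2) :
    ¬ (radoGraph pick p).Adj (radoWitness pick p n) w := by
  rw [radoGraph, SimpleGraph.fromRel_adj]
  rintro ⟨-, ⟨k, hk, hwk⟩ | ⟨k, rfl, hk⟩⟩
  · obtain rfl := radoWitness_injective hpick hk
    exact Finset.disjoint_left.1 hdisj hwk hw
  · rcases le_total k n with hkn | hnk
    · exact radoWitness_notMem_stage hpick hkn (Finset.mem_union_left _ hk)
    · exact radoWitness_notMem_stage hpick hnk (Finset.mem_union_right _ hw)

lemma radoGraph_extensionProperty (hpick : ∀ T B, pick T B ∉ B) (hp : Function.Surjective p) :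
    ExtensionProperty (radoGraph pick p) := by
  intro U W hUW
  obtain ⟨n, hn⟩ := hp (U, W)
  have hfresh := radoWitness_notMem_stage (p := p) hpick (le_refl n)
  rw [hn, Finset.mem_union, not_or] at hfresh
  refine ⟨radoWitness pick p n, hfresh.1, hfresh.2, fun u hu => ?_, fun w hw => ?_⟩
  · exact radoGraph_adj_radoWitness hpick (by rwa [hn])
  · exact not_radoGraph_adj_radoWitness hpick (by rwa [hn]) (by rwa [hn])

lemma radoGraph_le {G : SimpleGraph V} (hadj : ∀ T B, ∀ v ∈ T, G.Adj v (pick T B)) :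
    radoGraph pick p ≤ G := by
  intro a b hab
  rw [radoGraph, SimpleGraph.fromRel_adj] at hab
  obtain ⟨-, ⟨n, rfl, hb⟩ | ⟨n, rfl, ha⟩⟩ := hab
  · exact (hadj _ _ b hb).symm
  · exact hadj _ _ a ha

end RadoConstruction

lemma exists_le_extensionProperty {V : Type*} [Countable V] {G : SimpleGraph V}
    (h : ∀ T : Finset V, ∃ z, ∀ v ∈ T, G.Adj v z) : ∃ R ≤ G, ExtensionProperty R := by
  classical
  choose c hc using h
  obtain ⟨p, hp⟩ := exists_surjective_nat (Finset V × Finset V)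
  have hpick : ∀ T B, c (T ∪ B) ∉ B :=
    fun T B hB => G.irrefl (hc _ _ (Finset.mem_union_right T hB))
  exact ⟨radoGraph (fun T B => c (T ∪ B)) p,
    radoGraph_le fun T B v hv => hc _ v (Finset.mem_union_left B hv),
    radoGraph_extensionProperty hpick hp⟩

theorem nbhdFilter_nontrivial_iff_rado_spanning_general {V : Type*} [Countable V]
    (Γ : SimpleGraph V) :
    ((∅ : Set V) ∉ nbhdFilter Γ ↔
        ∃ R : SimpleGraph V, R ≤ Γ ∧ ExtensionProperty R) ∧
    ((∅ : Set V) ∉ nbhdFilter Γ ↔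
        ∃ R : SimpleGraph V, ExtensionProperty R ∧
          ∀ s : Set V, s ∈ nbhdFilter Γ → s ∈ nbhdFilter R) := by
  have spanning : (∅ : Set V) ∉ nbhdFilter Γ → ∃ R ≤ Γ, ExtensionProperty R :=
    fun h => exists_le_extensionProperty ((empty_notMem_nbhdFilter_iff Γ).1 h)
  refine ⟨⟨spanning, ?_⟩, ⟨fun h => ?_, ?_⟩⟩
  · rintro ⟨R, hRΓ, hR⟩ hΓ
    exact hR.empty_notMem_nbhdFilter (nbhdFilter_mono hRΓ hΓ)
  · obtain ⟨R, hRΓ, hR⟩ := spanning h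
    exact ⟨R, hR, fun s hs => nbhdFilter_mono hRΓ hs⟩
  · rintro ⟨R, hR, hsub⟩ hΓ
    exact hR.empty_notMem_nbhdFilter (hsub ∅ hΓ)

theorem nbhdFilter_nontrivial_iff_rado_spanning {V : Type*} [Countable V] [Infinite V]
    (Γ : SimpleGraph V) :
    ((∅ : Set V) ∉ nbhdFilter Γ ↔
        ∃ R : SimpleGraph V, R ≤ Γ ∧ ExtensionProperty R) ∧
    ((∅ : Set V) ∉ nbhdFilter Γ ↔
        ∃ R : SimpleGraph V, ExtensionProperty R ∧
          ∀ s : Set V, s ∈ nbhdFilter Γ → s ∈ nbhdFilter R) :=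
  nbhdFilter_nontrivial_iff_rado_spanning_general Γ
end

section
/- Let R₁ and R₂ be simple graphs on a common vertex set V with every edge of R₁ an edge of R₂, and let D be the graph on V whose edges are exactly the edges of R₂ that are not edges of R₁. Suppose that for every finite set S ⊆ V there is a vertex x adjacent in D to every vertex of S. Then for every vertex v, the open neighbourhood R₁(v) does not belong to the neighbourhood filter F_{R₂}; in particular F_{R₁} ≠ F_{R₂}. -/
/-!
Every member of the neighbourhood filter of `R₂` contains the common `R₂`-neighbourhood of
finitely many vertices `T`. A common `R₂ \ R₁`-neighbour `x` of `T ∪ {v}` lies in that common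
neighbourhood but is not an `R₁`-neighbour of `v`, so `R₁(v)` contains no such set.
-/

open Filter Set

namespace SimpleGraph

variable {V : Type*} (Γ : SimpleGraph V)

theorem nbhdFilter_eq_iInf_principal : nbhdFilter Γ = ⨅ v, 𝓟 (Γ.neighborSet v) := by
  have hrange : {s | ∃ v, s = Γ.neighborSet v} = range Γ.neighborSet := by
    ext; simp only [mem_ofPred_eq, mem_range, eq_comm]
  rw [nbhdFilter, generate_eq_biInf, hrange, iInf_range]

theorem mem_nbhdFilter_iff {s : Set V} :
    s ∈ nbhdFilter Γ ↔ ∃ T : Finset V, ⋂ v ∈ T, Γ.neighborSet v ⊆ s := by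
  simp only [nbhdFilter_eq_iInf_principal, mem_iInf_finite, iInf_principal_finset, mem_principal]

theorem neighborSet_mem_nbhdFilter (v : V) : Γ.neighborSet v ∈ nbhdFilter Γ :=
  mem_generate_of_mem ⟨v, rfl⟩

theorem notMem_nbhdFilter_of_forall_exists_adj {s : Set V}
    (h : ∀ T : Finset V, ∃ x ∉ s, ∀ v ∈ T, Γ.Adj v x) : s ∉ nbhdFilter Γ := by
  rw [mem_nbhdFilter_iff]
  rintro ⟨T, hT⟩
  obtain ⟨x, hxs, hxT⟩ := h T
  exact hxs (hT (mem_iInter₂.mpr hxT))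

end SimpleGraph

theorem nbhd_not_mem_of_difference_common_neighbours_general {V : Type*}
    (R₁ R₂ : SimpleGraph V)
    (hD : ∀ S : Finset V, ∃ x : V, ∀ v ∈ S, (R₂ \ R₁).Adj x v) :
    (∀ v : V, R₁.neighborSet v ∉ nbhdFilter R₂) ∧ nbhdFilter R₁ ≠ nbhdFilter R₂ := by
  classical
  have hnot (v : V) : R₁.neighborSet v ∉ nbhdFilter R₂ := by
    refine R₂.notMem_nbhdFilter_of_forall_exists_adj fun T ↦ ?_
    obtain ⟨x, hx⟩ := hD (insert v T)
    refine ⟨x, fun hvx ↦ (hx v (Finset.mem_insert_self v T)).2 hvx.symm, fun w hw ↦ ?_⟩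
    exact (hx w (Finset.mem_insert_of_mem hw)).1.symm
  refine ⟨hnot, fun h ↦ ?_⟩
  obtain ⟨x, -⟩ := hD ∅
  exact hnot x (h ▸ R₁.neighborSet_mem_nbhdFilter x)

/-- If `R₁` is a spanning subgraph of `R₂` and in the difference graph `D = R₂ \ R₁`
every finite set of vertices has a common neighbour, then no open `R₁`-neighbourhood
belongs to the neighbourhood filter of `R₂`; in particular the two neighbourhood
filters differ. -/
theorem nbhd_not_mem_of_difference_common_neighbours {V : Type*}
    (R₁ R₂ : SimpleGraph V) (hle : R₁ ≤ R₂)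
    (hD : ∀ S : Finset V, ∃ x : V, ∀ v ∈ S, (R₂ \ R₁).Adj x v) :
    (∀ v : V, R₁.neighborSet v ∉ nbhdFilter R₂) ∧ nbhdFilter R₁ ≠ nbhdFilter R₂ :=
  nbhd_not_mem_of_difference_common_neighbours_general R₁ R₂ hD
end

section
/- Let G be a primitive group of permutations of an infinite set Ω, and let τ be a G-invariant topology on Ω that contains a non-empty finite open set. Then τ is the discrete topology. -/
section MinimalOpen

variable {Ω : Type*} [TopologicalSpace Ω]

def IsMinimalOpen (U : Set Ω) : Prop :=
  Minimal (fun t : Set Ω => IsOpen t ∧ t.Nonempty) U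

def SameMinimalOpen (x y : Ω) : Prop :=
  ∃ U : Set Ω, IsMinimalOpen U ∧ x ∈ U ∧ y ∈ U

theorem IsMinimalOpen.eq_of_inter_nonempty {U V : Set Ω} (hU : IsMinimalOpen U)
    (hV : IsMinimalOpen V) (hUV : (U ∩ V).Nonempty) : U = V := by
  have hopen : IsOpen (U ∩ V) ∧ (U ∩ V).Nonempty := ⟨hU.prop.1.inter hV.prop.1, hUV⟩
  rw [← hU.eq_of_subset hopen Set.inter_subset_left, hV.eq_of_subset hopen Set.inter_subset_right]

theorem exists_isMinimalOpen_subset {s : Set Ω} (hs : IsOpen s) (hfin : s.Finite)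
    (hne : s.Nonempty) : ∃ U ⊆ s, IsMinimalOpen U := by
  set S : Set (Set Ω) := {t | t ⊆ s ∧ IsOpen t ∧ t.Nonempty}
  have hS : S.Finite := hfin.finite_subsets.subset fun t ht => ht.1
  obtain ⟨U, hUs, hU⟩ := hS.exists_le_minimal (a := s) ⟨subset_rfl, hs, hne⟩
  exact ⟨U, hUs, hU.prop.2, fun t ht htU => hU.le_of_le ⟨htU.trans hU.prop.1, ht⟩ htU⟩

theorem IsMinimalOpen.image {f : Ω ≃ Ω} (hf : ∀ s : Set Ω, IsOpen s ↔ IsOpen (f '' s))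
    {U : Set Ω} (hU : IsMinimalOpen U) : IsMinimalOpen (f '' U) := by
  refine ⟨⟨(hf U).1 hU.prop.1, hU.prop.2.image f⟩, fun V hV hVU => ?_⟩
  have hpre : IsOpen (f ⁻¹' V) ∧ (f ⁻¹' V).Nonempty :=
    ⟨(hf _).2 (by rw [Set.image_preimage_eq V f.surjective]; exact hV.1),
      hV.2.preimage f.surjective⟩
  have hpreU : f ⁻¹' V ⊆ U := by
    rwa [← Set.image_subset_image_iff f.injective, Set.image_preimage_eq V f.surjective]
  exact Set.image_subset_iff.2 (hU.le_of_le hpre hpreU)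

theorem sameMinimalOpen_equivalence (hcover : ∀ x : Ω, ∃ U, IsMinimalOpen U ∧ x ∈ U) :
    Equivalence (SameMinimalOpen (Ω := Ω)) where
  refl x := by
    obtain ⟨U, hU, hx⟩ := hcover x
    exact ⟨U, hU, hx, hx⟩
  symm := fun ⟨U, hU, hx, hy⟩ => ⟨U, hU, hy, hx⟩
  trans := fun ⟨U, hU, hx, hy⟩ ⟨V, hV, hy', hz⟩ =>
    ⟨U, hU, hx, hU.eq_of_inter_nonempty hV ⟨_, hy, hy'⟩ ▸ hz⟩

theorem SameMinimalOpen.image {f : Ω ≃ Ω} (hf : ∀ s : Set Ω, IsOpen s ↔ IsOpen (f '' s))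
    {x y : Ω} (hxy : SameMinimalOpen x y) : SameMinimalOpen (f x) (f y) :=
  let ⟨U, hU, hx, hy⟩ := hxy
  ⟨f '' U, hU.image hf, Set.mem_image_of_mem f hx, Set.mem_image_of_mem f hy⟩

theorem discreteTopology_of_sameMinimalOpen_eq
    (hcover : ∀ x : Ω, ∃ U, IsMinimalOpen U ∧ x ∈ U)
    (hdiag : ∀ x y : Ω, SameMinimalOpen x y → x = y) : DiscreteTopology Ω := by
  refine discreteTopology_iff_isOpen_singleton.2 fun x => ?_
  obtain ⟨U, hU, hx⟩ := hcover x
  have hUx : U = {x} :=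
    Set.eq_singleton_iff_unique_mem.2 ⟨hx, fun y hy => hdiag y x ⟨U, hU, hy, hx⟩⟩
  exact hUx ▸ hU.prop.1

theorem IsMinimalOpen.eq_univ_of_forall_sameMinimalOpen {U : Set Ω} (hU : IsMinimalOpen U)
    (huniv : ∀ x y : Ω, SameMinimalOpen x y) : U = Set.univ := by
  obtain ⟨a, ha⟩ := hU.prop.2
  refine Set.eq_univ_of_forall fun y => ?_
  obtain ⟨V, hV, haV, hyV⟩ := huniv a y
  exact hV.eq_of_inter_nonempty hU ⟨a, haV, ha⟩ ▸ hyV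

theorem SubgroupTransitive.forall_exists_isMinimalOpen_mem {G : Subgroup (Equiv.Perm Ω)}
    (htrans : SubgroupTransitive G) (hinv : TopInvariant G ‹TopologicalSpace Ω›)
    {U : Set Ω} (hU : IsMinimalOpen U) (x : Ω) : ∃ V, IsMinimalOpen V ∧ x ∈ V := by
  obtain ⟨a, ha⟩ := hU.prop.2
  obtain ⟨g, hg, rfl⟩ := htrans a x
  exact ⟨g '' U, hU.image (hinv g hg), Set.mem_image_of_mem g ha⟩

end MinimalOpen

/-- A topology invariant under a primitive group on an infinite set which has a
non-empty finite open set is discrete. -/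
theorem discrete_of_finite_open {Ω : Type*} [Infinite Ω] [τ : TopologicalSpace Ω]
    (G : Subgroup (Equiv.Perm Ω)) (hprim : SubgroupPrimitive G) (hinv : TopInvariant G τ)
    (h : ∃ s : Set Ω, IsOpen s ∧ s.Finite ∧ s.Nonempty) :
    DiscreteTopology Ω := by
  obtain ⟨htrans, hblocks⟩ := hprim
  obtain ⟨s, hs, hfin, hne⟩ := h
  obtain ⟨U, hUs, hU⟩ := exists_isMinimalOpen_subset hs hfin hne
  have hcover := htrans.forall_exists_isMinimalOpen_mem hinv hU
  rcases hblocks _ (sameMinimalOpen_equivalence hcover)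
      (fun g hg _ _ => SameMinimalOpen.image (hinv g hg)) with hdiag | huniv
  · exact discreteTopology_of_sameMinimalOpen_eq hcover fun x y => (hdiag x y).1
  · have hUuniv := hU.eq_univ_of_forall_sameMinimalOpen huniv
    exact (Set.infinite_univ (hfin.subset (hUuniv ▸ hUs))).elim
end

section
/- Let G be a primitive group of permutations of an infinite set Ω, and let τ be a G-invariant topology on Ω. If Ω is the union of finitely many subsets each of which is discrete in the subspace topology induced by τ, then τ is the discrete topology. -/
/-!
Inseparability is a `G`-invariant equivalence relation, so by primitivity the topology is
either indiscrete or T0. Two distinct points of a discrete subspace never specialize to one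
another; hence in the indiscrete case every piece is a subsingleton and `Ω` would be finite.
In the T0 case the space is homogeneous, so one isolated point makes every point isolated.
Otherwise, if some (hence every) point is closed, then in this T1 space without isolated points
each discrete set is nowhere dense, and finitely many of them cannot cover `Ω`; and if no point
is closed, specialization produces an infinite chain, which meets each piece in at most one point.
-/

open Set Topology

section Pieces

variable {X : Type*} [TopologicalSpace X]

theorem IsNowhereDense.union {s t : Set X} (hs : IsNowhereDense s) (ht : IsNowhereDense t) :
    IsNowhereDense (s ∪ t) := by
  rw [IsNowhereDense, closure_union,
    interior_union_isClosed_of_interior_empty isClosed_closure ht, hs]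

theorem isNowhereDense_iUnion {ι : Type*} [Finite ι] {s : ι → Set X}
    (hs : ∀ i, IsNowhereDense (s i)) : IsNowhereDense (⋃ i, s i) := by
  rw [← biUnion_univ]
  induction (univ : Set ι), finite_univ (α := ι) using Set.Finite.induction_on with
  | empty => simp
  | insert _ _ ih => rw [biUnion_insert]; exact (hs _).union ih

theorem isNowhereDense_of_discreteTopology [T1Space X] (hiso : ∀ x : X, ¬IsOpen {x})
    {s : Set X} [DiscreteTopology s] : IsNowhereDense s := by
  refine isNowhereDense_iff_forall_notMem_nhds.2 fun x hx hcl => hiso x ?_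
  obtain ⟨U, hU, hUs⟩ := discreteTopology_subtype_iff'.1 ‹_› x hx
  set V := interior (closure s) ∩ U
  have hV : IsOpen V := isOpen_interior.inter hU
  -- `V \ {x}` is open and misses `s`, hence misses `closure s ⊇ V`.
  have hVx : Disjoint (V \ {x}) (closure s) := by
    refine Disjoint.closure_right ?_ (hV.sdiff isClosed_singleton)
    rw [disjoint_iff_inter_eq_empty, eq_empty_iff_forall_notMem]
    rintro y ⟨⟨⟨-, hyU⟩, hyx⟩, hys⟩
    exact hyx (hUs.subset ⟨hyU, hys⟩)
  have hxV : x ∈ V := ⟨mem_interior_iff_mem_nhds.2 hcl, (hUs.symm.subset rfl).1⟩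
  suffices V = {x} from this ▸ hV
  refine eq_singleton_iff_unique_mem.2 ⟨hxV, fun y hy => by_contra fun hyx => ?_⟩
  exact hVx.ne_of_mem ⟨hy, hyx⟩ (interior_subset hy.1) rfl

theorem eq_of_specializes_of_discreteTopology {D : Set X} [DiscreteTopology D] {x y : X}
    (hx : x ∈ D) (hy : y ∈ D) (h : x ⤳ y) : x = y := by
  have : (⟨x, hx⟩ : D) ⤳ ⟨y, hy⟩ := IsInducing.subtypeVal.specializes_iff.1 h
  exact congrArg Subtype.val (specializes_iff_eq.1 this)

theorem IsChain.finite_of_subset_iUnion_discrete {ι : Type*} [Finite ι] {s : Set X}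
    (hs : IsChain (· ⤳ ·) s) {D : ι → Set X} (hsD : s ⊆ ⋃ i, D i)
    (hD : ∀ i, DiscreteTopology (D i)) : s.Finite := by
  have hpiece (i : ι) : (s ∩ D i).Subsingleton := by
    rintro x ⟨hxs, hxD⟩ y ⟨hys, hyD⟩
    by_contra hne
    rcases hs hxs hys hne with hxy | hyx
    · exact hne (eq_of_specializes_of_discreteTopology hxD hyD hxy)
    · exact hne (eq_of_specializes_of_discreteTopology hyD hxD hyx).symm
  refine (finite_iUnion fun i => (hpiece i).finite).subset fun x hx => ?_
  obtain ⟨i, hi⟩ := mem_iUnion.1 (hsD hx)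
  exact mem_iUnion.2 ⟨i, hx, hi⟩

theorem exists_infinite_isChain_specializes [T0Space X] [Nonempty X]
    (h : ∀ x : X, ¬IsClosed {x}) : ∃ s : Set X, s.Infinite ∧ IsChain (· ⤳ ·) s := by
  let := specializationOrder X
  have : NoMinOrder X := ⟨fun x => by
    obtain ⟨y, hy, hyx⟩ : ∃ y ∈ closure {x}, y ≠ x := by
      by_contra! hcl
      exact h x (isClosed_of_closure_subset hcl)
    exact ⟨y, lt_of_le_of_ne (specializes_iff_mem_closure.2 hy) hyx⟩⟩
  obtain ⟨f, hf⟩ := Nat.exists_strictAnti X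
  exact ⟨range f, infinite_range_of_injective hf.injective, hf.antitone.isChain_range.symm⟩

end Pieces

section Homogeneous

variable (X : Type*) [TopologicalSpace X]

def IsHomogeneous : Prop := ∀ x y : X, ∃ h : X ≃ₜ X, h x = y

variable {X}

theorem IsHomogeneous.discreteTopology_of_isOpen_singleton (hX : IsHomogeneous X) {x : X}
    (hx : IsOpen {x}) : DiscreteTopology X := by
  refine discreteTopology_iff_isOpen_singleton.2 fun y => ?_
  obtain ⟨h, rfl⟩ := hX x y
  rwa [← image_singleton, h.isOpen_image]

theorem IsHomogeneous.t1Space_of_isClosed_singleton (hX : IsHomogeneous X) {x : X}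
    (hx : IsClosed {x}) : T1Space X := by
  refine ⟨fun y => ?_⟩
  obtain ⟨h, rfl⟩ := hX x y
  rwa [← image_singleton, h.isClosed_image]

end Homogeneous

section PermutationGroup

variable {Ω : Type*} [τ : TopologicalSpace Ω] {G : Subgroup (Equiv.Perm Ω)}

theorem TopInvariant.continuous (hinv : TopInvariant G τ) {g : Equiv.Perm Ω} (hg : g ∈ G) :
    Continuous g := by
  refine continuous_def.2 fun s hs => ?_
  rw [← Equiv.image_symm_eq_preimage, ← Equiv.Perm.inv_def]
  exact (hinv g⁻¹ (inv_mem hg) s).1 hs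

def TopInvariant.toHomeomorph (hinv : TopInvariant G τ) {g : Equiv.Perm Ω} (hg : g ∈ G) :
    Ω ≃ₜ Ω where
  toEquiv := g
  continuous_toFun := hinv.continuous hg
  continuous_invFun := hinv.continuous (inv_mem hg)

theorem TopInvariant.isHomogeneous (hinv : TopInvariant G τ) (htrans : SubgroupTransitive G) :
    IsHomogeneous Ω := fun x y =>
  let ⟨_, hg, hgx⟩ := htrans x y
  ⟨hinv.toHomeomorph hg, hgx⟩

theorem SubgroupPrimitive.t0Space_or_forall_inseparable (hprim : SubgroupPrimitive G)
    (hinv : TopInvariant G τ) : T0Space Ω ∨ ∀ x y : Ω, Inseparable x y := by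
  rw [t0Space_iff_inseparable]
  refine (hprim.2 Inseparable ⟨Inseparable.refl, Inseparable.symm, Inseparable.trans⟩
    fun g hg x y hxy => hxy.map (hinv.continuous hg)).imp (fun h x y => (h x y).1) id

end PermutationGroup

/-- A topology invariant under a primitive group on an infinite set which is a
union of finitely many discrete subsets is discrete. -/
theorem discrete_of_finitely_many_discrete_pieces {Ω : Type*} [Infinite Ω]
    [τ : TopologicalSpace Ω]
    (G : Subgroup (Equiv.Perm Ω)) (hprim : SubgroupPrimitive G) (hinv : TopInvariant G τ)
    (h : ∃ (n : ℕ) (D : Fin n → Set Ω),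
      (⋃ i, D i) = Set.univ ∧ ∀ i, DiscreteTopology (D i)) :
    DiscreteTopology Ω := by
  obtain ⟨n, D, hcover, hD⟩ := h
  have hhom := hinv.isHomogeneous hprim.1
  by_cases hiso : ∃ x : Ω, IsOpen {x}
  · obtain ⟨x, hx⟩ := hiso
    exact hhom.discreteTopology_of_isOpen_singleton hx
  push Not at hiso
  exfalso
  rcases hprim.t0Space_or_forall_inseparable hinv with hT0 | hindisc
  · by_cases hcl : ∃ x : Ω, IsClosed {x}
    · obtain ⟨x, hx⟩ := hcl
      have := hhom.t1Space_of_isClosed_singleton hx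
      have hnd : IsNowhereDense (univ : Set Ω) :=
        hcover ▸ isNowhereDense_iUnion fun _ => isNowhereDense_of_discreteTopology hiso
      simp [IsNowhereDense] at hnd
    · push Not at hcl
      obtain ⟨s, hs, hchain⟩ := exists_infinite_isChain_specializes hcl
      exact hs (hchain.finite_of_subset_iUnion_discrete (hcover ▸ subset_univ s) hD)
  · have hchain : IsChain (· ⤳ ·) (univ : Set Ω) := fun x _ y _ _ =>
      .inl (hindisc x y).specializes
    exact infinite_univ (hchain.finite_of_subset_iUnion_discrete hcover.ge hD)
end

section
/- Every infinite Hausdorff topological space contains an infinite subset whose induced subspace topology is discrete. -/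
/-- Every infinite Hausdorff space contains an infinite subset whose induced
subspace topology is discrete. -/
theorem exists_infinite_discrete_subset (X : Type*) [TopologicalSpace X] [T2Space X]
    [Infinite X] :
    ∃ D : Set X, D.Infinite ∧ DiscreteTopology D :=
  exists_infinite_discreteTopology X
end

section
/- Let Γ be a simple graph on a countably infinite vertex set V in which every finite set of vertices has a common neighbour (for every finite S ⊆ V there is a vertex x adjacent to every vertex of S). Then Γ has a spanning subgraph R (a graph on the same vertex set V with every edge of R an edge of Γ) satisfying the extension property. -/
/-!
Enumerate all pairs of finite vertex sets as `e 0, e 1, …` and use common neighbours in `Γ` to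
pick `z n` adjacent to every vertex of `e 0, …, e n` and to all earlier `z k`, so that `z n`
avoids those sets and the `z n` are distinct. Joining each `z n` to the first set of `e n` gives
`R ≤ Γ`, and `z n` witnesses the extension property for `e n = (U, W)`: an `R`-edge from `z n`
to `w ∈ W` can come neither from the star at `z n` (as `U ∩ W = ∅`) nor from the star at an
earlier `z m` (which `z n` avoids) nor from that at a later `z m = w` (which avoids `W`).
-/

open Finset Function

namespace SimpleGraph

variable {V : Type*}

theorem exists_seq_adj_of_common_neighbours (G : SimpleGraph V)
    (h : ∀ S : Finset V, ∃ x : V, ∀ v ∈ S, G.Adj x v) (A : ℕ → Finset V) :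
    ∃ z : ℕ → V, ∀ n, (∀ v ∈ A n, G.Adj (z n) v) ∧ ∀ k < n, G.Adj (z n) (z k) := by
  classical
  choose f hf using h
  -- `P n` is the set `{z 0, …, z (n - 1)}` of vertices chosen so far.
  obtain ⟨P, hP⟩ : ∃ P : ℕ → Finset V, ∀ n, P (n + 1) = insert (f (A n ∪ P n)) (P n) :=
    ⟨fun n => Nat.rec ∅ (fun n s => insert (f (A n ∪ s)) s) n, fun _ => rfl⟩
  have hPmono : Monotone P := monotone_nat_of_le_succ fun n => hP n ▸ subset_insert _ _
  refine ⟨fun n => f (A n ∪ P n), fun n => ⟨fun v hv => hf _ v (mem_union_left _ hv),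
    fun k hk => hf _ _ (mem_union_right _ ?_)⟩⟩
  exact hPmono (Nat.succ_le_of_lt hk) (hP k ▸ mem_insert_self _ _)

def unionStars (z : ℕ → V) (U : ℕ → Finset V) : SimpleGraph V :=
  fromRel fun a b => ∃ n, a = z n ∧ b ∈ U n

theorem unionStars_le {G : SimpleGraph V} {z : ℕ → V} {U : ℕ → Finset V}
    (h : ∀ n, ∀ u ∈ U n, G.Adj (z n) u) : unionStars z U ≤ G := by
  rintro a b ⟨-, ⟨n, rfl, hb⟩ | ⟨n, rfl, ha⟩⟩
  exacts [h n b hb, (h n a ha).symm]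

theorem extensionProperty_unionStars [DecidableEq V] {e : ℕ → Finset V × Finset V}
    (he : Surjective e) {z : ℕ → V} (hz : Injective z) (hfresh : ∀ k n, k ≤ n → z n ∉ (e k).1 ∪ (e k).2) :
    ExtensionProperty (unionStars z fun n => (e n).1) := by
  intro U W hUW
  obtain ⟨n, hn⟩ := he (U, W)
  obtain ⟨rfl, rfl⟩ := Prod.ext_iff.mp hn
  have hzU : z n ∉ (e n).1 := fun hm => hfresh n n le_rfl (mem_union_left _ hm)
  have hzW : z n ∉ (e n).2 := fun hm => hfresh n n le_rfl (mem_union_right _ hm)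
  refine ⟨z n, hzU, hzW, fun u hu => ⟨(ne_of_mem_of_not_mem hu hzU).symm, .inl ⟨n, rfl, hu⟩⟩, ?_⟩
  rintro w hw ⟨-, ⟨m, hm, hwm⟩ | ⟨m, rfl, hzm⟩⟩
  · obtain rfl := hz hm
    exact Finset.disjoint_left.mp hUW hwm hw
  · rcases le_total m n with hmn | hnm
    · exact hfresh m n hmn (mem_union_left _ hzm)
    · exact hfresh n m hnm (mem_union_right _ hw)

end SimpleGraph

open SimpleGraph

theorem rado_spanning_subgraph_of_common_neighbours_general {V : Type*} [Countable V]
    (Γ : SimpleGraph V) (h : ∀ S : Finset V, ∃ x : V, ∀ v ∈ S, Γ.Adj x v) :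
    ∃ R : SimpleGraph V, R ≤ Γ ∧ ExtensionProperty R := by
  classical
  obtain ⟨e, he⟩ := exists_surjective_nat (Finset V × Finset V)
  obtain ⟨z, hz⟩ := Γ.exists_seq_adj_of_common_neighbours h
    fun n => (range (n + 1)).biUnion fun k => (e k).1 ∪ (e k).2
  have hfresh : ∀ k n, k ≤ n → z n ∉ (e k).1 ∪ (e k).2 := fun k n hkn hmem =>
    Γ.loopless.irrefl _ <| (hz n).1 _ <|
      subset_biUnion_of_mem _ (mem_range.2 (Nat.lt_succ_of_le hkn)) hmem
  have hinj : Injective z := .of_lt_imp_ne fun k n hkn => ((hz n).2 k hkn).ne'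
  refine ⟨unionStars z fun n => (e n).1, unionStars_le fun n u hu => (hz n).1 u ?_,
    extensionProperty_unionStars he hinj hfresh⟩
  exact subset_biUnion_of_mem _ (self_mem_range_succ n) (mem_union_left _ hu)

/-- A countable graph in which every finite set of vertices has a common neighbour
contains the Rado graph as a spanning subgraph. -/
theorem rado_spanning_subgraph_of_common_neighbours {V : Type*} [Countable V] [Infinite V]
    (Γ : SimpleGraph V) (h : ∀ S : Finset V, ∃ x : V, ∀ v ∈ S, Γ.Adj x v) :
    ∃ R : SimpleGraph V, R ≤ Γ ∧ ExtensionProperty R :=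
  rado_spanning_subgraph_of_common_neighbours_general Γ h
end
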